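/- arXiv:1209.5027 — 8 statements merged into one kernel-verified Lean document; each statement's English description precedes it below -/
import Mathlib

section
/- Let u : ℝ → ℝ be continuous on [0, x₀], twice continuously differentiable on (0, x₀), satisfy u(0) = 0 and the ODE x²u''(x) = a·x·u'(x) + b·u(x) − c·(u'(x) − 1)² for all x ∈ (0, x₀), where c > 0. If additionally u'(x) → 1 as x → 0⁺ and a + b < 0, then a contradiction follows; i.e., no such solution exists. -/
/-!
Since `u' → 1` and `u(0) = 0`, L'Hôpital gives `u(x)/x → 1`. Dividing the equation by `x` and
dropping the nonpositive term `-c (u' - 1)² / x` yields `x u''(x) ≤ a u'(x) + b u(x)/x → a + b < 0`,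
so `u'' ≤ -K/x` near `0` for some `K > 0`. Integrating, `u'(x) ≥ C - K log x → ∞` as `x → 0⁺`,
contradicting `u' → 1`.
-/

open Set Filter Topology Real

theorem tendsto_div_self_nhdsGT_zero_of_tendsto_deriv {f : ℝ → ℝ} {L : ℝ}
    (hdf : ∀ᶠ x in 𝓝[>] 0, DifferentiableAt ℝ f x) (hf : Tendsto f (𝓝[>] 0) (𝓝 0))
    (hf' : Tendsto (deriv f) (𝓝[>] 0) (𝓝 L)) :
    Tendsto (fun x => f x / x) (𝓝[>] 0) (𝓝 L) :=
  deriv.lhopital_zero_nhdsGT hdf (by simp) hf (tendsto_nhdsWithin_of_tendsto_nhds tendsto_id)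
    (by simpa using hf')

theorem tendsto_atTop_nhdsGT_zero_of_mul_deriv_le {g : ℝ → ℝ} {K : ℝ} (hK : 0 < K)
    (hdg : ∀ᶠ x in 𝓝[>] 0, DifferentiableAt ℝ g x)
    (hle : ∀ᶠ x in 𝓝[>] 0, x * deriv g x ≤ -K) :
    Tendsto g (𝓝[>] 0) atTop := by
  obtain ⟨δ, hδ : 0 < δ, hsub⟩ := mem_nhdsGT_iff_exists_Ioo_subset.mp (hdg.and hle)
  set φ : ℝ → ℝ := fun x => g x + K * log x
  have hφ : ∀ x ∈ Ioo 0 δ, HasDerivAt φ (deriv g x + K * x⁻¹) x := fun x hx =>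
    (hsub hx).1.hasDerivAt.add ((hasDerivAt_log hx.1.ne').const_mul K)
  have hanti : AntitoneOn φ (Ioo 0 δ) := by
    refine antitoneOn_of_deriv_nonpos (convex_Ioo 0 δ)
      (fun x hx => (hφ x hx).continuousAt.continuousWithinAt) ?_ ?_ <;> rw [interior_Ioo]
    · exact fun x hx => (hφ x hx).differentiableAt.differentiableWithinAt
    · intro x hx
      have hx₀ : 0 < x := hx.1
      have hgx : x * (deriv g x + K * x⁻¹) ≤ 0 := by
        have hcancel : x * (K * x⁻¹) = K := by field_simp
        linarith [(hsub hx).2]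
      rw [(hφ x hx).deriv]
      exact nonpos_of_mul_nonpos_right hgx hx₀
  have hy : δ / 2 ∈ Ioo 0 δ := ⟨by positivity, by linarith⟩
  have hlower : ∀ᶠ x in 𝓝[>] 0, φ (δ / 2) + -K * log x ≤ g x := by
    filter_upwards [Ioo_mem_nhdsGT hy.1] with x hx
    have hφx := hanti ⟨hx.1, hx.2.trans hy.2⟩ hy hx.2.le
    linarith
  exact tendsto_atTop_mono' _ hlower <| tendsto_atTop_add_const_left _ _ <|
    tendsto_log_nhdsGT_zero.const_mul_atBot_of_neg (neg_lt_zero.2 hK)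

theorem mul_le_of_sq_mul_eq_sub_sq {a b c x p q v : ℝ} (hc : 0 ≤ c) (hx : 0 < x)
    (h : x ^ 2 * p = a * x * q + b * v - c * (q - 1) ^ 2) :
    x * p ≤ a * q + b * (v / x) := by
  have hgap : a * q + b * (v / x) - x * p = c * (q - 1) ^ 2 / x := by
    field_simp
    linear_combination -h
  linarith [show 0 ≤ c * (q - 1) ^ 2 / x by positivity]

/-- Nonexistence for a + b < 0 (Proposition 2.2): a continuous solution of the
singular ODE with `u(0) = 0` and `u'(x) → 1` as `x → 0⁺` cannot exist. -/
theorem stmt_0 (a b c x₀ : ℝ) (hc : 0 < c) (hx₀ : 0 < x₀) (u : ℝ → ℝ)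
    (hcont : ContinuousOn u (Set.Icc 0 x₀))
    (hC2 : ContDiffOn ℝ 2 u (Set.Ioo 0 x₀))
    (hu0 : u 0 = 0)
    (hode : ∀ x ∈ Set.Ioo 0 x₀,
      x ^ 2 * deriv (deriv u) x
        = a * x * deriv u x + b * u x - c * (deriv u x - 1) ^ 2)
    (hlim : Filter.Tendsto (deriv u) (nhdsWithin 0 (Set.Ioi 0)) (nhds 1))
    (hab : a + b < 0) : False := by
  have hnear : Ioo 0 x₀ ∈ 𝓝[>] (0 : ℝ) := Ioo_mem_nhdsGT hx₀
  have hdu : ∀ᶠ x in 𝓝[>] 0, DifferentiableAt ℝ u x := eventually_of_mem hnear fun x hx =>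
    (hC2.differentiableOn (by norm_num)).differentiableAt (isOpen_Ioo.mem_nhds hx)
  have hddu : ∀ᶠ x in 𝓝[>] 0, DifferentiableAt ℝ (deriv u) x := eventually_of_mem hnear
    fun x hx => ((hC2.deriv_of_isOpen isOpen_Ioo (by norm_num)).differentiableOn
      one_ne_zero).differentiableAt (isOpen_Ioo.mem_nhds hx)
  have hu : Tendsto u (𝓝[>] 0) (𝓝 0) := by
    have h := hcont 0 ⟨le_rfl, hx₀.le⟩
    rw [ContinuousWithinAt, hu0] at h
    rw [← nhdsWithin_Ioo_eq_nhdsGT hx₀]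
    exact h.mono_left (nhdsWithin_mono _ Ioo_subset_Icc_self)
  have hrhs : Tendsto (fun x => a * deriv u x + b * (u x / x)) (𝓝[>] 0) (𝓝 (a + b)) := by
    simpa using (hlim.const_mul a).add
      ((tendsto_div_self_nhdsGT_zero_of_tendsto_deriv hdu hu hlim).const_mul b)
  have hle : ∀ᶠ x in 𝓝[>] 0, x * deriv (deriv u) x ≤ -(-(a + b) / 2) := by
    filter_upwards [hnear, hrhs.eventually (gt_mem_nhds (by linarith : a + b < (a + b) / 2))]
      with x hx hlt
    linarith [mul_le_of_sq_mul_eq_sub_sq hc.le hx.1 (hode x hx)]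
  exact not_tendsto_nhds_of_tendsto_atTop
    (tendsto_atTop_nhdsGT_zero_of_mul_deriv_le (by linarith) hddu hle) 1 hlim
end

section
/- Suppose y ∈ C⁰([0,∞)) ∩ C²((0,∞)) is nonconstant and satisfies x²y''(x) = f(x)y'(x) + g(x, y(x)) for x > 0, where f, g are continuous and there is y* ∈ ℝ such that g(x, y) > 0 whenever y > y* and g(x, y) < 0 whenever y < y* (for all x > 0). If x₀ > 0 satisfies y'(x₀) = 0 and y(x₀) > y*, then y'(x) < 0 for all x ∈ (0, x₀), y'(x) > 0 for all x > x₀, and y(x) > y(x₀) for all x ≠ x₀. -/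
/-!
At a critical point `c > 0` with `y c > y*` the equation gives `c² y''(c) = g(c, y c) > 0`, so
`y'` changes sign from negative to positive at `c`. Just to the right of `x₀` we therefore have
`y' > 0`; if `y'` vanished again, then at its first zero `c > x₀` the function would have
increased, so `y c > y x₀ > y*` and `y'` would be negative just before `c`, which is absurd.
The same argument, reflected, works to the left of `x₀`.
-/

open Set Filter Topology

theorem exists_first_zero_of_eventually_pos {h : ℝ → ℝ} {a b : ℝ} (hab : a < b)
    (hh : ContinuousOn h (Ioc a b)) (hpos : ∀ᶠ t in 𝓝[>] a, 0 < h t) (hb : h b ≤ 0) :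
    ∃ c ∈ Ioc a b, h c = 0 ∧ ∀ t ∈ Ioo a c, 0 < h t := by
  obtain ⟨u, hau, hu⟩ := (mem_nhdsGT_iff_exists_mem_Ioc_Ioo_subset hab).1 hpos
  set K := Icc u b ∩ h ⁻¹' Iic 0
  have hKclosed : IsClosed K :=
    (hh.mono fun t ht => ⟨hau.1.trans_le ht.1, ht.2⟩).preimage_isClosed_of_isClosed
      isClosed_Icc isClosed_Iic
  obtain ⟨c, ⟨hcK, hcle⟩, hleast⟩ :=
    (isCompact_Icc.of_isClosed_subset hKclosed inter_subset_left).exists_isLeast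
      ⟨b, ⟨hau.2, le_rfl⟩, hb⟩
  have hac : a < c := hau.1.trans_le hcK.1
  have hpos_c : ∀ t ∈ Ioo a c, 0 < h t := by
    intro t ht
    by_cases htu : t < u
    · exact hu ⟨ht.1, htu⟩
    · by_contra! hht
      exact (hleast ⟨⟨not_lt.1 htu, ht.2.le.trans hcK.2⟩, hht⟩).not_gt ht.2
  have hcont : ContinuousWithinAt h (Iio c) c :=
    (hh c ⟨hac, hcK.2⟩).mono_of_mem_nhdsWithin
      (mem_of_superset (Ioo_mem_nhdsLT hac) fun t ht => ⟨ht.1, ht.2.le.trans hcK.2⟩)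
  have hc_nonneg : 0 ≤ h c :=
    ge_of_tendsto hcont (mem_of_superset (Ioo_mem_nhdsLT hac) fun t ht => (hpos_c t ht).le)
  exact ⟨c, ⟨hac, hcK.2⟩, le_antisymm hcle hc_nonneg, hpos_c⟩

theorem deriv_sign_change_of_deriv_deriv_pos {y : ℝ → ℝ} {c : ℝ}
    (h2 : 0 < deriv (deriv y) c) (h1 : deriv y c = 0) :
    (∀ᶠ t in 𝓝[<] c, deriv y t < 0) ∧ (∀ᶠ t in 𝓝[>] c, 0 < deriv y t) :=
  have hsign := nhdsWithin_le_nhds (eventually_nhdsWithin_sign_eq_of_deriv_pos h2 h1)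
  ⟨deriv_neg_left_of_sign_deriv hsign, deriv_pos_right_of_sign_deriv hsign⟩

theorem deriv_pos_Ioo_of_deriv_deriv_pos {y : ℝ → ℝ} {a b ystar : ℝ}
    (hy : ContinuousOn y (Ico a b)) (hy' : ContinuousOn (deriv y) (Ico a b))
    (hmin : ∀ c ∈ Ico a b, deriv y c = 0 → ystar < y c → 0 < deriv (deriv y) c)
    (ha : deriv y a = 0) (hya : ystar < y a) :
    ∀ x ∈ Ioo a b, 0 < deriv y x := by
  intro x hx
  by_contra! hx0
  obtain ⟨c, hc, hc0, hpos⟩ := exists_first_zero_of_eventually_pos hx.1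
    (hy'.mono fun t ht => ⟨ht.1.le, ht.2.trans_lt hx.2⟩)
    (deriv_sign_change_of_deriv_deriv_pos (hmin a ⟨le_rfl, hx.1.trans hx.2⟩ ha hya) ha).2 hx0
  have hcb : c ∈ Ico a b := ⟨hc.1.le, hc.2.trans_lt hx.2⟩
  have hyc : y a < y c :=
    strictMonoOn_of_deriv_pos (convex_Icc a c)
      (hy.mono fun t ht => ⟨ht.1, ht.2.trans_lt hcb.2⟩) (by rwa [interior_Icc])
      (left_mem_Icc.2 hc.1.le) (right_mem_Icc.2 hc.1.le) hc.1
  obtain ⟨t, hneg, ht⟩ :=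
    ((deriv_sign_change_of_deriv_deriv_pos (hmin c hcb hc0 (hya.trans hyc)) hc0).1.and
      (Ioo_mem_nhdsLT hc.1)).exists
  exact (hpos t ht).not_gt hneg

theorem deriv_neg_Ioo_of_deriv_deriv_pos {y : ℝ → ℝ} {a b ystar : ℝ}
    (hy : ContinuousOn y (Ioc b a)) (hy' : ContinuousOn (deriv y) (Ioc b a))
    (hmin : ∀ c ∈ Ioc b a, deriv y c = 0 → ystar < y c → 0 < deriv (deriv y) c)
    (ha : deriv y a = 0) (hya : ystar < y a) :
    ∀ x ∈ Ioo b a, deriv y x < 0 := by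
  have hderiv : deriv (fun x => y (-x)) = fun x => -deriv y (-x) :=
    funext fun x => deriv_comp_neg y x
  have hderiv2 (x : ℝ) : deriv (deriv fun x => y (-x)) x = deriv (deriv y) (-x) := by
    rw [hderiv]
    exact (deriv.neg (f := fun x => deriv y (-x))).trans (by rw [deriv_comp_neg, neg_neg])
  have hneg_mem {s : ℝ} (hs : s ∈ Ico (-a) (-b)) : -s ∈ Ioc b a :=
    ⟨by linarith [hs.2], by linarith [hs.1]⟩
  intro x hx
  have hpos := deriv_pos_Ioo_of_deriv_deriv_pos (y := fun x => y (-x)) (ystar := ystar)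
    (hy.comp continuousOn_neg fun s hs => hneg_mem hs)
    (hderiv ▸ (hy'.comp continuousOn_neg fun s hs => hneg_mem hs).neg)
    (fun c hc hc0 hyc => hderiv2 c ▸ hmin (-c) (hneg_mem hc) (by simpa [hderiv] using hc0) hyc)
    (by simp [hderiv, ha]) (by simpa using hya) (-x) ⟨by linarith [hx.2], by linarith [hx.1]⟩
  simpa [hderiv] using hpos

theorem stmt_1_general (y f : ℝ → ℝ) (g : ℝ → ℝ → ℝ) (ystar : ℝ)
    (hyC2 : ContDiffOn ℝ 2 y (Set.Ioi 0))
    (hode : ∀ x ∈ Set.Ioi (0:ℝ),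
      x ^ 2 * deriv (deriv y) x = f x * deriv y x + g x (y x))
    (hgpos : ∀ x ∈ Set.Ioi (0:ℝ), ∀ z : ℝ, ystar < z → 0 < g x z)
    (x₀ : ℝ) (hx₀ : 0 < x₀) (hcrit : deriv y x₀ = 0) (habove : ystar < y x₀) :
    (∀ x ∈ Set.Ioo 0 x₀, deriv y x < 0) ∧
    (∀ x, x₀ < x → 0 < deriv y x) ∧
    (∀ x ∈ Set.Ioi (0:ℝ), x ≠ x₀ → y x₀ < y x) := by
  have hy : ContinuousOn y (Ioi 0) := hyC2.continuousOn
  have hy' : ContinuousOn (deriv y) (Ioi 0) :=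
    hyC2.continuousOn_deriv_of_isOpen isOpen_Ioi (by norm_num)
  have hmin : ∀ c ∈ Ioi (0:ℝ), deriv y c = 0 → ystar < y c → 0 < deriv (deriv y) c := by
    intro c hc hc0 hyc
    have hc2 := hode c hc
    rw [hc0, mul_zero, zero_add] at hc2
    exact pos_of_mul_pos_right (hc2 ▸ hgpos c hc _ hyc) (sq_nonneg c)
  have hleft : ∀ x ∈ Ioo 0 x₀, deriv y x < 0 :=
    deriv_neg_Ioo_of_deriv_deriv_pos (hy.mono fun t ht => ht.1)
      (hy'.mono fun t ht => ht.1) (fun c hc => hmin c hc.1) hcrit habove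
  have hright : ∀ x, x₀ < x → 0 < deriv y x := fun x hx =>
    deriv_pos_Ioo_of_deriv_deriv_pos (b := x + 1) (hy.mono fun t ht => hx₀.trans_le ht.1)
      (hy'.mono fun t ht => hx₀.trans_le ht.1) (fun c hc => hmin c (hx₀.trans_le hc.1))
      hcrit habove x ⟨hx, lt_add_one x⟩
  refine ⟨hleft, hright, fun x hx hne => ?_⟩
  rcases hne.lt_or_gt with hlt | hgt
  · exact strictAntiOn_of_deriv_neg (convex_Icc x x₀) (hy.mono fun t ht => hx.trans_le ht.1)
      (fun t ht => by rw [interior_Icc] at ht; exact hleft t ⟨hx.trans ht.1, ht.2⟩)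
      (left_mem_Icc.2 hlt.le) (right_mem_Icc.2 hlt.le) hlt
  · exact strictMonoOn_of_deriv_pos (convex_Icc x₀ x) (hy.mono fun t ht => hx₀.trans_le ht.1)
      (fun t ht => by rw [interior_Icc] at ht; exact hright t ht.1)
      (left_mem_Icc.2 hgt.le) (right_mem_Icc.2 hgt.le) hgt

/-- Lemma 3.1 (first alternative): if `y'(x₀) = 0` and `y(x₀) > y*`, then `y'` is
negative before `x₀`, positive after, and `y > y(x₀)` away from `x₀`. -/
theorem stmt_1 (y f : ℝ → ℝ) (g : ℝ → ℝ → ℝ) (ystar : ℝ)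
    (hycont : ContinuousOn y (Set.Ici 0))
    (hyC2 : ContDiffOn ℝ 2 y (Set.Ioi 0))
    (hnonconst : ¬ ∀ x ∈ Set.Ici (0:ℝ), y x = y 0)
    (hf : ContinuousOn f (Set.Ioi 0))
    (hg : ContinuousOn (fun p : ℝ × ℝ => g p.1 p.2) (Set.Ioi 0 ×ˢ Set.univ))
    (hode : ∀ x ∈ Set.Ioi (0:ℝ),
      x ^ 2 * deriv (deriv y) x = f x * deriv y x + g x (y x))
    (hgpos : ∀ x ∈ Set.Ioi (0:ℝ), ∀ z : ℝ, ystar < z → 0 < g x z)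
    (hgneg : ∀ x ∈ Set.Ioi (0:ℝ), ∀ z : ℝ, z < ystar → g x z < 0)
    (x₀ : ℝ) (hx₀ : 0 < x₀) (hcrit : deriv y x₀ = 0) (habove : ystar < y x₀) :
    (∀ x ∈ Set.Ioo 0 x₀, deriv y x < 0) ∧
    (∀ x, x₀ < x → 0 < deriv y x) ∧
    (∀ x ∈ Set.Ioi (0:ℝ), x ≠ x₀ → y x₀ < y x) :=
  stmt_1_general y f g ystar hyC2 hode hgpos x₀ hx₀ hcrit habove
end

section
/- Let u : [0,∞) → ℝ be C¹ on [0,∞) and C³ on (0,∞), with u(0) = 0, u'(0) = 1, and u'''(x) > 0 for all x > 0. Then for every x > 0 one has 1 + u'(x) > 2·u(x)/x. -/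
/-!
Write `v` for the one-sided derivative of `u` on `[0, ∞)`. Since `u''' > 0`, `v` is strictly convex,
so on `[0, x]` it lies strictly below its chord. Integrating, `u(x) - u(0)` is strictly less than
the trapezoid value `x (v(0) + v(x)) / 2`, which with `u(0) = 0`, `v(0) = 1` is the claim.
-/

open Set Filter Topology

/-- The trapezoid rule overestimates the integral of a strictly convex function. -/
theorem two_mul_sub_lt_mul_add_of_strictConvexOn_deriv {f f' : ℝ → ℝ} {a b : ℝ} (hab : a < b)
    (hf : ContinuousOn f (Icc a b)) (hf' : ∀ x ∈ Ioo a b, HasDerivAt f (f' x) x)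
    (hconv : StrictConvexOn ℝ (Icc a b) f') :
    2 * (f b - f a) < (b - a) * (f' a + f' b) := by
  -- `q` is a primitive of the chord of `f'` over `[a, b]`, scaled by `b - a`
  set q : ℝ → ℝ := fun x ↦ (b - a) * f' a * (x - a) + (f' b - f' a) * (x - a) ^ 2 / 2
  have hq : ∀ x, HasDerivAt q ((b - x) * f' a + (x - a) * f' b) x := fun x ↦ by
    have hx : HasDerivAt (fun y ↦ y - a) 1 x := (hasDerivAt_id' x).sub_const a
    refine ((hx.const_mul ((b - a) * f' a)).add
      (((hx.pow 2).const_mul (f' b - f' a)).div_const 2)).congr_deriv ?_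
    ring
  obtain ⟨c, hc, hslope⟩ := exists_hasDerivAt_eq_slope (fun x ↦ (b - a) * f x - q x) _ hab
    ((continuousOn_const.mul hf).sub fun x _ ↦ (hq x).continuousAt.continuousWithinAt)
    fun x hx ↦ ((hf' x hx).const_mul (b - a)).sub (hq x)
  have hchord := hconv.secant_strict_mono_aux1 (left_mem_Icc.2 hab.le) (right_mem_Icc.2 hab.le)
    hc.1 hc.2
  rw [eq_div_iff (sub_ne_zero.2 hab.ne')] at hslope
  simp only [q] at hslope
  have hneg : (b - a) * (2 * (f b - f a) - (b - a) * (f' a + f' b)) < 0 := by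
    nlinarith [sub_pos.2 hab]
  linarith [neg_of_mul_neg_right hneg (sub_pos.2 hab).le]

theorem strictConvexOn_derivWithin_Ici {u : ℝ → ℝ} {a : ℝ}
    (hu : ContinuousOn (derivWithin u (Ici a)) (Ici a))
    (hu''' : ∀ x ∈ Ioi a, 0 < deriv (deriv (deriv u)) x) :
    StrictConvexOn ℝ (Ici a) (derivWithin u (Ici a)) := by
  refine strictConvexOn_of_deriv2_pos (convex_Ici a) hu fun x hx ↦ ?_
  rw [interior_Ici] at hx
  have hv : derivWithin u (Ici a) =ᶠ[𝓝 x] deriv u := by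
    filter_upwards [Ioi_mem_nhds hx] with y hy
    exact derivWithin_of_mem_nhds (Ici_mem_nhds hy)
  simpa [hv.deriv.deriv_eq] using hu''' x hx

theorem stmt_3_general (u : ℝ → ℝ)
    (hC1 : ContDiffOn ℝ 1 u (Set.Ici 0))
    (hu0 : u 0 = 0)
    (hu'0 : derivWithin u (Set.Ici 0) 0 = 1)
    (hu''' : ∀ x ∈ Set.Ioi (0:ℝ), 0 < deriv (deriv (deriv u)) x) :
    ∀ x ∈ Set.Ioi (0:ℝ), 2 * u x / x < 1 + deriv u x := by
  intro x (hx : 0 < x)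
  have hconv := strictConvexOn_derivWithin_Ici
    (hC1.continuousOn_derivWithin (uniqueDiffOn_Ici 0) le_rfl) hu'''
  have hderiv : ∀ y ∈ Ioo 0 x, HasDerivAt u (derivWithin u (Ici 0) y) y := fun y hy ↦
    ((hC1.differentiableOn one_ne_zero) y hy.1.le).hasDerivWithinAt.hasDerivAt (Ici_mem_nhds hy.1)
  have key := two_mul_sub_lt_mul_add_of_strictConvexOn_deriv hx
    (hC1.continuousOn.mono Icc_subset_Ici_self) hderiv
    (hconv.subset Icc_subset_Ici_self (convex_Icc 0 x))
  rw [hu0, hu'0, derivWithin_of_mem_nhds (Ici_mem_nhds hx)] at key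
  rw [div_lt_iff₀ hx]
  linarith

/-- Corollary 3.4 (speculative-attack inequality): `1 + u'(x) > 2 u(x)/x`. -/
theorem stmt_3 (u : ℝ → ℝ)
    (hC1 : ContDiffOn ℝ 1 u (Set.Ici 0))
    (hC3 : ContDiffOn ℝ 3 u (Set.Ioi 0))
    (hu0 : u 0 = 0)
    (hu'0 : derivWithin u (Set.Ici 0) 0 = 1)
    (hu''' : ∀ x ∈ Set.Ioi (0:ℝ), 0 < deriv (deriv (deriv u)) x) :
    ∀ x ∈ Set.Ioi (0:ℝ), 2 * u x / x < 1 + deriv u x :=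
  stmt_3_general u hC1 hu0 hu'0 hu'''
end

section
/- Let c > 0 and let V : (−∞, T] → ℝ be a differentiable function satisfying V'(t) = p(t) + q(t)V(t) − cV(t)² with p(t) → 0 and q(t) → 0 as t → −∞. Then V(t) → 0 as t → −∞. -/
/-!
Fix `ε > 0`. Far enough to the left, `|p| ≤ cε²/4` and `|q| ≤ cε/4`, so `V' ≤ -(c/2) V²` wherever
`|V| ≥ ε`. Along such a stretch `1/V - (c/2) t` is nondecreasing, so a solution that reaches `-ε`
stays below it and blows up to `-∞` within time `2/(cε)` forward, and one that reaches `ε` blows up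
to `+∞` within time `2/(cε)` backward. Since `V` is defined on all of `(-∞, T]`, neither can happen
more than `2/(cε)` to the left of where the bounds on `p` and `q` set in, so `|V t| < ε` there.
-/

open Set Filter

section Riccati

variable {f f' : ℝ → ℝ} {a b k ε : ℝ}

theorem monotoneOn_inv_sub_mul_of_deriv_le_neg_mul_sq
    (hf : ∀ t ∈ Icc a b, HasDerivAt f (f' t) t) (hne : ∀ t ∈ Icc a b, f t ≠ 0)
    (hf' : ∀ t ∈ Icc a b, f' t ≤ -k * f t ^ 2) :
    MonotoneOn (fun t => (f t)⁻¹ - k * t) (Icc a b) := by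
  have hderiv : ∀ t ∈ Icc a b, HasDerivAt (fun t => (f t)⁻¹ - k * t) (-f' t / f t ^ 2 - k) t :=
    fun t ht => by
      simpa using ((hf t ht).fun_inv (hne t ht)).fun_sub ((hasDerivAt_id t).const_mul k)
  refine monotoneOn_of_hasDerivWithinAt_nonneg (convex_Icc a b)
    (fun t ht => (hderiv t ht).continuousAt.continuousWithinAt)
    (fun t ht => (hderiv t (interior_subset ht)).hasDerivWithinAt) fun t ht => ?_
  have ht := interior_subset ht
  have hsq : 0 < f t ^ 2 := sq_pos_of_ne_zero (hne t ht)
  rw [sub_nonneg, le_div_iff₀ hsq]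
  linarith [hf' t ht]

theorem le_neg_of_deriv_le_neg_mul_sq (hk : 0 < k) (hε : 0 < ε)
    (hf : ∀ t ∈ Icc a b, HasDerivAt f (f' t) t)
    (hf' : ∀ t ∈ Icc a b, f t ≤ -ε → f' t ≤ -k * f t ^ 2) (ha : f a ≤ -ε) :
    ∀ t ∈ Icc a b, f t ≤ -ε :=
  image_le_of_deriv_right_lt_deriv_boundary (B' := fun _ => 0)
    (fun t ht => (hf t ht).continuousAt.continuousWithinAt)
    (fun t ht => (hf t (Ico_subset_Icc_self ht)).hasDerivWithinAt) ha
    (fun _ => hasDerivAt_const _ _) fun t ht hft => by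
      have := hf' t (Ico_subset_Icc_self ht) hft.le
      rw [hft] at this
      nlinarith [mul_pos hk (mul_pos hε hε)]

theorem sub_lt_of_le_neg_of_deriv_le_neg_mul_sq (hk : 0 < k) (hε : 0 < ε)
    (hf : ∀ t ∈ Icc a b, HasDerivAt f (f' t) t)
    (hf' : ∀ t ∈ Icc a b, f t ≤ -ε → f' t ≤ -k * f t ^ 2) (ha : f a ≤ -ε) :
    b - a < 1 / (k * ε) := by
  rcases lt_or_ge b a with hba | hab
  · linarith [show 0 < 1 / (k * ε) by positivity]
  have hle := le_neg_of_deriv_le_neg_mul_sq hk hε hf hf' ha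
  have hneg : ∀ t ∈ Icc a b, f t < 0 := fun t ht => (hle t ht).trans_lt (neg_lt_zero.2 hε)
  have hmono := monotoneOn_inv_sub_mul_of_deriv_le_neg_mul_sq hf (fun t ht => (hneg t ht).ne)
    fun t ht => hf' t ht (hle t ht)
  have hgab : (f a)⁻¹ - k * a ≤ (f b)⁻¹ - k * b :=
    hmono (left_mem_Icc.2 hab) (right_mem_Icc.2 hab) hab
  have hfa : -ε⁻¹ ≤ (f a)⁻¹ := by
    rw [← inv_neg, inv_le_inv_of_neg (neg_lt_zero.2 hε) (hneg a (left_mem_Icc.2 hab))]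
    exact ha
  have hfb : (f b)⁻¹ < 0 := inv_lt_zero.2 (hneg b (right_mem_Icc.2 hab))
  have hkba : k * (b - a) < ε⁻¹ := by linarith
  rw [lt_div_iff₀ (by positivity)]
  calc (b - a) * (k * ε) = k * (b - a) * ε := by ring
    _ < ε⁻¹ * ε := by gcongr
    _ = 1 := inv_mul_cancel₀ hε.ne'

/-- `f' ≤ -k f²` is invariant under `f ↦ (s ↦ -f (-s))`, which swaps the two cases. -/
theorem sub_lt_of_le_of_deriv_le_neg_mul_sq (hk : 0 < k) (hε : 0 < ε)
    (hf : ∀ t ∈ Icc a b, HasDerivAt f (f' t) t)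
    (hf' : ∀ t ∈ Icc a b, ε ≤ f t → f' t ≤ -k * f t ^ 2) (hb : ε ≤ f b) :
    b - a < 1 / (k * ε) := by
  have hmem : ∀ s ∈ Icc (-b) (-a), -s ∈ Icc a b := fun s ⟨h₁, h₂⟩ => ⟨le_neg.1 h₂, neg_le.1 h₁⟩
  have := sub_lt_of_le_neg_of_deriv_le_neg_mul_sq (f := fun s => -f (-s)) (f' := fun s => f' (-s))
    (a := -b) (b := -a) hk hε
    (fun s hs => by simpa using ((hf (-s) (hmem s hs)).comp s (hasDerivAt_neg s)).fun_neg)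
    (fun s hs hfs => by simpa using hf' (-s) (hmem s hs) (by linarith))
    (by simpa using hb)
  linarith

theorem abs_lt_of_deriv_le_neg_mul_sq (hk : 0 < k) (hε : 0 < ε) {M t : ℝ}
    (hf : ∀ s ≤ M, HasDerivAt f (f' s) s)
    (hf' : ∀ s ≤ M, ε ≤ |f s| → f' s ≤ -k * f s ^ 2) (ht : t ≤ M - 1 / (k * ε)) :
    |f t| < ε := by
  have hL : 0 < 1 / (k * ε) := by positivity
  have hmem : ∀ {a b}, b ≤ M → ∀ s ∈ Icc a b, s ≤ M := fun hb s hs => hs.2.trans hb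
  refine abs_lt.2 ⟨lt_of_not_ge fun hft => ?_, lt_of_not_ge fun hft => ?_⟩
  · have := sub_lt_of_le_neg_of_deriv_le_neg_mul_sq (b := M) hk hε
      (fun s hs => hf s (hmem le_rfl s hs))
      (fun s hs hfs => hf' s (hmem le_rfl s hs) (by rw [abs_of_neg (by linarith)]; linarith)) hft
    linarith
  · have := sub_lt_of_le_of_deriv_le_neg_mul_sq (a := t - 1 / (k * ε)) hk hε
      (fun s hs => hf s (hmem (by linarith) s hs))
      (fun s hs hfs => hf' s (hmem (by linarith) s hs) (hfs.trans (le_abs_self _))) hft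
    linarith

end Riccati

theorem add_mul_sub_mul_sq_le_neg_half_mul_sq {c ε P Q v : ℝ} (hc : 0 < c)
    (hP : |P| ≤ c * ε ^ 2 / 4) (hQ : |Q| ≤ c * ε / 4) (hv : ε ≤ |v|) :
    P + Q * v - c * v ^ 2 ≤ -(c / 2) * v ^ 2 := by
  have hε : 0 ≤ ε := by nlinarith [abs_nonneg Q]
  have hε2 : ε ^ 2 ≤ v ^ 2 := by rw [← sq_abs v]; gcongr
  have hPv : P ≤ c * v ^ 2 / 4 := (le_abs_self P).trans (hP.trans (by nlinarith))
  have hQv : Q * v ≤ c * v ^ 2 / 4 :=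
    calc Q * v ≤ |Q| * |v| := (le_abs_self _).trans (abs_mul Q v).le
      _ ≤ c * ε / 4 * |v| := by gcongr
      _ ≤ c * |v| / 4 * |v| := by gcongr
      _ = c * v ^ 2 / 4 := by rw [← sq_abs v]; ring
  linarith

theorem stmt_6_general (c T : ℝ) (hc : 0 < c) (V p q : ℝ → ℝ)
    (hV : ∀ t ≤ T, HasDerivAt V (p t + q t * V t - c * V t ^ 2) t)
    (hp0 : Filter.Tendsto p Filter.atBot (nhds 0))
    (hq0 : Filter.Tendsto q Filter.atBot (nhds 0)) :
    Filter.Tendsto V Filter.atBot (nhds 0) := by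
  refine Metric.tendsto_nhds.2 fun ε hε => ?_
  have hp : ∀ᶠ t in atBot, |p t| < c * ε ^ 2 / 4 :=
    hp0.abs.eventually_lt_const (by rw [abs_zero]; positivity)
  have hq : ∀ᶠ t in atBot, |q t| < c * ε / 4 :=
    hq0.abs.eventually_lt_const (by rw [abs_zero]; positivity)
  obtain ⟨M, hM⟩ := eventually_atBot.1 (hp.and (hq.and (eventually_le_atBot T)))
  filter_upwards [eventually_le_atBot (M - 1 / (c / 2 * ε))] with t ht
  rw [Real.dist_eq, sub_zero]
  exact abs_lt_of_deriv_le_neg_mul_sq (half_pos hc) hε (fun s hs => hV s (hM s hs).2.2)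
    (fun s hs hVs => add_mul_sub_mul_sq_le_neg_half_mul_sq hc (hM s hs).1.le (hM s hs).2.1.le hVs)
    ht

/-- Lemma 2.1 (core): a globally defined solution of the Riccati-type equation
`V' = p + qV - cV²` with `p, q → 0` at `-∞` satisfies `V → 0` at `-∞`. -/
theorem stmt_6 (c T : ℝ) (hc : 0 < c) (V p q : ℝ → ℝ)
    (hpcont : ContinuousOn p (Set.Iic T))
    (hqcont : ContinuousOn q (Set.Iic T))
    (hV : ∀ t ≤ T, HasDerivAt V (p t + q t * V t - c * V t ^ 2) t)
    (hp0 : Filter.Tendsto p Filter.atBot (nhds 0))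
    (hq0 : Filter.Tendsto q Filter.atBot (nhds 0)) :
    Filter.Tendsto V Filter.atBot (nhds 0) :=
  stmt_6_general c T hc V p q hV hp0 hq0
end

section
/- Let u : [0,∞) → ℝ be continuous, C² on (0,∞), bounded, satisfy the ODE x²u'' = axu' + bu − c(u'−1)² on (0,∞) with c > 0 and b ≠ 0, nonconstant, and eventually monotone. Then u(x) → c/b as x → ∞. -/
/-!
Being monotone and bounded, `u` has a limit `l`. In the variable `t = log x`, `w = u ∘ exp` solves
`w'' = (a + 1) w' + b w - c (e⁻ᵗ w' - 1)²`, whose right-hand side tends to `L = b l - c` as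
`t → ∞` and `w' → 0`. Since `w` converges, `w'` is small at arbitrarily late times (mean value
theorem). If `L > 0`, then `w'' ≥ L / 2` on a band `|w'| ≤ δ`, so once `w'` enters the band it can
neither leave it downwards nor stay in it forever; hence eventually `w' ≥ δ` and `w → ∞`, which is
absurd. Symmetrically `L < 0` is impossible, so `l = c / b`.
-/

open Filter Set Topology Real

theorem MonotoneOn.exists_tendsto_of_bddAbove {ι α : Type*} [LinearOrder ι] [TopologicalSpace α]
    [ConditionallyCompleteLinearOrder α] [OrderTopology α] {f : ι → α} {a : ι}
    (hf : MonotoneOn f (Ici a)) (hbdd : BddAbove (f '' Ici a)) :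
    ∃ l, Tendsto f atTop (𝓝 l) := by
  have hmono : Monotone fun x => f (max x a) := fun x y hxy =>
    hf (le_max_right x a) (le_max_right y a) (max_le_max_right a hxy)
  have hrange : BddAbove (range fun x => f (max x a)) :=
    hbdd.mono (range_subset_iff.2 fun x => mem_image_of_mem f (le_max_right x a))
  refine ⟨_, (tendsto_atTop_ciSup hmono hrange).congr' ?_⟩
  filter_upwards [eventually_ge_atTop a] with x hx
  rw [max_eq_left hx]

theorem AntitoneOn.exists_tendsto_of_bddBelow {ι α : Type*} [LinearOrder ι] [TopologicalSpace α]
    [ConditionallyCompleteLinearOrder α] [OrderTopology α] {f : ι → α} {a : ι}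
    (hf : AntitoneOn f (Ici a)) (hbdd : BddBelow (f '' Ici a)) :
    ∃ l, Tendsto f atTop (𝓝 l) :=
  MonotoneOn.exists_tendsto_of_bddAbove (α := αᵒᵈ) hf hbdd

section SecondOrder

variable {W f g : ℝ → ℝ} {t₀ δ d l L : ℝ}

theorem le_of_hasDerivAt_of_eq_imp_pos (hf : ∀ t, HasDerivAt f (g t) t) {y : ℝ}
    (h₀ : y ≤ f t₀) (hg : ∀ t ≥ t₀, f t = y → 0 < g t) : ∀ t ≥ t₀, y ≤ f t := by
  intro t ht
  have := image_le_of_deriv_right_lt_deriv_boundary' (a := t₀) (b := t) (f := fun s => -f s)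
    (f' := fun s => -g s) (B := fun _ => -y) (B' := fun _ => 0)
    (fun s _ => (hf s).continuousAt.neg.continuousWithinAt)
    (fun s _ => (hf s).neg.hasDerivWithinAt) (neg_le_neg h₀) continuousOn_const
    (fun s _ => hasDerivWithinAt_const _ _ _)
    (fun s hs hfs => neg_neg_of_pos (hg s hs.1 (neg_inj.1 hfs))) ⟨ht, le_rfl⟩
  exact neg_le_neg_iff.1 this

theorem tendsto_atTop_of_hasDerivAt_of_le (hW : ∀ t, HasDerivAt W (f t) t) (hδ : 0 < δ)
    (hf : ∀ t ≥ t₀, δ ≤ f t) : Tendsto W atTop atTop := by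
  have hgrowth : ∀ t ≥ t₀, δ * (t - t₀) ≤ W t - W t₀ := fun t ht =>
    (convex_Ici t₀).mul_sub_le_image_sub_of_le_deriv
      (fun s _ => (hW s).continuousAt.continuousWithinAt)
      (fun s _ => (hW s).differentiableAt.differentiableWithinAt)
      (fun s hs => (hW s).deriv ▸ hf s (interior_subset hs)) t₀ self_mem_Ici t ht ht
  refine tendsto_atTop_mono' atTop ?_ (tendsto_atTop_add_const_left _ (W t₀)
    ((tendsto_atTop_add_const_right _ (-t₀) tendsto_id).const_mul_atTop hδ))
  filter_upwards [eventually_ge_atTop t₀] with t ht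
  simp only [id]
  linarith [hgrowth t ht]

theorem tendsto_atTop_of_hasDerivAt_of_le_on_band (hW : ∀ t, HasDerivAt W (f t) t)
    (hf : ∀ t, HasDerivAt f (g t) t) (hδ : 0 < δ) (hd : 0 < d) (h₀ : |f t₀| ≤ δ)
    (hg : ∀ t ≥ t₀, |f t| ≤ δ → d ≤ g t) : Tendsto W atTop atTop := by
  have hlower : ∀ t ≥ t₀, -δ ≤ f t :=
    le_of_hasDerivAt_of_eq_imp_pos hf (abs_le.1 h₀).1 fun t ht hft =>
      hd.trans_le (hg t ht (by rw [hft, abs_neg, abs_of_pos hδ]))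
  obtain ⟨t₁, ht₁, hft₁⟩ : ∃ t₁ ≥ t₀, δ ≤ f t₁ := by
    by_contra! hupper
    have hf_top : Tendsto f atTop atTop := tendsto_atTop_of_hasDerivAt_of_le hf hd
      fun t ht => hg t ht (abs_le.2 ⟨hlower t ht, (hupper t ht).le⟩)
    obtain ⟨t, hft, ht⟩ := (hf_top.eventually_ge_atTop δ |>.and (eventually_ge_atTop t₀)).exists
    exact (hupper t ht).not_ge hft
  refine tendsto_atTop_of_hasDerivAt_of_le hW hδ (t₀ := t₁) ?_
  exact le_of_hasDerivAt_of_eq_imp_pos hf hft₁ fun t ht hft =>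
    hd.trans_le (hg t (ht₁.trans ht) (by rw [hft, abs_of_pos hδ]))

theorem frequently_abs_le_of_tendsto (hW : ∀ t, HasDerivAt W (f t) t)
    (hl : Tendsto W atTop (𝓝 l)) (hδ : 0 < δ) : ∃ᶠ t in atTop, |f t| ≤ δ := by
  have hincr : Tendsto (fun t => W (t + 1) - W t) atTop (𝓝 0) := by
    simpa using (hl.comp (tendsto_atTop_add_const_right atTop 1 tendsto_id)).sub hl
  rw [frequently_atTop]
  intro a
  obtain ⟨T, hTa, hT⟩ := ((eventually_ge_atTop a).and
    (hincr.eventually (Metric.closedBall_mem_nhds 0 hδ))).exists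
  obtain ⟨t, ht, hft⟩ := exists_hasDerivAt_eq_slope W f (lt_add_one T)
    (fun s _ => (hW s).continuousAt.continuousWithinAt) fun s _ => hW s
  refine ⟨t, hTa.trans ht.1.le, ?_⟩
  rw [hft, add_sub_cancel_left, div_one, ← Real.dist_0_eq_abs]
  exact hT

theorem nonpos_of_tendsto_of_hasDerivAt {G : ℝ → ℝ → ℝ} (hW : ∀ t, HasDerivAt W (f t) t)
    (hf : ∀ t, HasDerivAt f (G t (f t)) t) (hl : Tendsto W atTop (𝓝 l))
    (hG : Tendsto (Function.uncurry G) (atTop ×ˢ 𝓝 0) (𝓝 L)) : L ≤ 0 := by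
  by_contra! hL
  obtain ⟨pT, hpT, pδ, hpδ, hG_pos⟩ :=
    eventually_prod_iff.1 (hG.eventually_const_lt (half_lt_self hL))
  obtain ⟨T, hT⟩ := eventually_atTop.1 hpT
  obtain ⟨δ, hδ, hδG⟩ := Metric.nhds_basis_closedBall.eventually_iff.1 hpδ
  obtain ⟨t₀, hft₀, ht₀⟩ :=
    ((frequently_abs_le_of_tendsto hW hl hδ).and_eventually (eventually_ge_atTop T)).exists
  refine not_tendsto_atTop_of_tendsto_nhds hl
    (tendsto_atTop_of_hasDerivAt_of_le_on_band hW hf hδ (half_pos hL) hft₀ fun t ht hft => ?_)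
  refine (hG_pos (hT t (ht₀.trans ht)) (hδG ?_)).le
  rwa [Metric.mem_closedBall, Real.dist_0_eq_abs]

theorem eq_zero_of_tendsto_of_hasDerivAt {G : ℝ → ℝ → ℝ} (hW : ∀ t, HasDerivAt W (f t) t)
    (hf : ∀ t, HasDerivAt f (G t (f t)) t) (hl : Tendsto W atTop (𝓝 l))
    (hG : Tendsto (Function.uncurry G) (atTop ×ˢ 𝓝 0) (𝓝 L)) : L = 0 := by
  refine le_antisymm (nonpos_of_tendsto_of_hasDerivAt hW hf hl hG) (neg_nonpos.1 ?_)
  have hG_neg : Tendsto (Function.uncurry fun t y => -G t (-y)) (atTop ×ˢ 𝓝 0) (𝓝 (-L)) := by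
    refine (hG.comp (tendsto_id.prodMap ?_)).neg
    simpa using tendsto_neg (0 : ℝ)
  exact nonpos_of_tendsto_of_hasDerivAt (W := fun t => -W t) (fun t => (hW t).neg)
    (fun t => by simpa using (hf t).fun_neg) hl.neg hG_neg

end SecondOrder

theorem hasDerivAt_comp_exp {φ : ℝ → ℝ} {t : ℝ} (hφ : DifferentiableAt ℝ φ (exp t)) :
    HasDerivAt (fun s => φ (exp s)) (exp t * deriv φ (exp t)) t := by
  rw [mul_comm]
  exact hφ.hasDerivAt.comp t (hasDerivAt_exp t)

/-- The equation `x² u'' = a x u' + b u - c (u' - 1)²` in the variable `t = log x` reads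
`w'' = eulerLogRHS a b c w t w'` for `w = u ∘ exp`. -/
noncomputable def eulerLogRHS (a b c : ℝ) (w : ℝ → ℝ) (t y : ℝ) : ℝ :=
  (a + 1) * y + b * w t - c * (exp (-t) * y - 1) ^ 2

theorem hasDerivAt_exp_mul_deriv_comp_exp {a b c t : ℝ} {u : ℝ → ℝ}
    (hu : DifferentiableAt ℝ (deriv u) (exp t))
    (hode : exp t ^ 2 * deriv (deriv u) (exp t)
      = a * exp t * deriv u (exp t) + b * u (exp t) - c * (deriv u (exp t) - 1) ^ 2) :
    HasDerivAt (fun s => exp s * deriv u (exp s))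
      (eulerLogRHS a b c (fun s => u (exp s)) t (exp t * deriv u (exp t))) t := by
  refine ((hasDerivAt_exp t).mul (hasDerivAt_comp_exp hu)).congr_deriv ?_
  have hinv : exp (-t) * exp t = 1 := by rw [← exp_add, neg_add_cancel, exp_zero]
  rw [eulerLogRHS, ← mul_assoc (exp (-t)), hinv, one_mul]
  linear_combination hode

theorem tendsto_eulerLogRHS {a b c l : ℝ} {w : ℝ → ℝ} (hw : Tendsto w atTop (𝓝 l)) :
    Tendsto (Function.uncurry (eulerLogRHS a b c w)) (atTop ×ˢ 𝓝 0) (𝓝 (b * l - c)) := by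
  have hexp := tendsto_exp_neg_atTop_nhds_zero.comp (tendsto_fst (g := 𝓝 (0 : ℝ)))
  have := ((tendsto_snd.const_mul (a + 1)).add ((hw.comp tendsto_fst).const_mul b)).sub
    (((hexp.mul tendsto_snd).sub_const 1).pow 2 |>.const_mul c)
  rwa [show (a + 1) * 0 + b * l - c * (0 * 0 - 1) ^ 2 = b * l - c by ring] at this

theorem stmt_16_general (a b c : ℝ) (hb : b ≠ 0) (u : ℝ → ℝ)
    (hC2 : ContDiffOn ℝ 2 u (Set.Ioi 0))
    (hbdd : ∃ M : ℝ, ∀ x ∈ Set.Ici (0:ℝ), |u x| ≤ M)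
    (hode : ∀ x ∈ Set.Ioi (0:ℝ),
      x ^ 2 * deriv (deriv u) x
        = a * x * deriv u x + b * u x - c * (deriv u x - 1) ^ 2)
    (hmono : ∃ x₁ : ℝ, 0 ≤ x₁ ∧
      (MonotoneOn u (Set.Ici x₁) ∨ AntitoneOn u (Set.Ici x₁))) :
    Filter.Tendsto u Filter.atTop (nhds (c / b)) := by
  obtain ⟨M, hM⟩ := hbdd
  obtain ⟨x₁, hx₁, hmono⟩ := hmono
  have hbdd : Bornology.IsBounded (u '' Ici x₁) :=
    isBounded_iff_forall_norm_le.2 ⟨M, by rintro _ ⟨x, hx, rfl⟩; exact hM x (hx₁.trans hx)⟩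
  obtain ⟨l, hl⟩ : ∃ l, Tendsto u atTop (𝓝 l) :=
    hmono.elim (·.exists_tendsto_of_bddAbove hbdd.bddAbove)
      (·.exists_tendsto_of_bddBelow hbdd.bddBelow)
  have hu : ∀ x ∈ Ioi (0 : ℝ), DifferentiableAt ℝ u x := fun x hx =>
    (hC2.contDiffAt (Ioi_mem_nhds hx)).differentiableAt two_ne_zero
  have hu' : ∀ x ∈ Ioi (0 : ℝ), DifferentiableAt ℝ (deriv u) x := fun x hx =>
    ((hC2.deriv_of_isOpen isOpen_Ioi le_rfl).contDiffAt (Ioi_mem_nhds hx)).differentiableAt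
      one_ne_zero
  have hwl : Tendsto (fun t => u (exp t)) atTop (𝓝 l) := hl.comp tendsto_exp_atTop
  have hlim : b * l - c = 0 := eq_zero_of_tendsto_of_hasDerivAt
    (fun t => hasDerivAt_comp_exp (hu _ (exp_pos t)))
    (fun t => hasDerivAt_exp_mul_deriv_comp_exp (hu' _ (exp_pos t)) (hode _ (exp_pos t)))
    hwl (tendsto_eulerLogRHS hwl)
  rwa [show c / b = l by rw [div_eq_iff hb]; linarith]

/-- Lemma 3.2(i), case `b ≠ 0`: a bounded, nonconstant, eventually monotone
solution converges to `c/b` at infinity. -/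
theorem stmt_16 (a b c : ℝ) (hc : 0 < c) (hb : b ≠ 0) (u : ℝ → ℝ)
    (hcont : ContinuousOn u (Set.Ici 0))
    (hC2 : ContDiffOn ℝ 2 u (Set.Ioi 0))
    (hbdd : ∃ M : ℝ, ∀ x ∈ Set.Ici (0:ℝ), |u x| ≤ M)
    (hode : ∀ x ∈ Set.Ioi (0:ℝ),
      x ^ 2 * deriv (deriv u) x
        = a * x * deriv u x + b * u x - c * (deriv u x - 1) ^ 2)
    (hnonconst : ¬ ∀ x ∈ Set.Ici (0:ℝ), u x = u 0)
    (hmono : ∃ x₁ : ℝ, 0 ≤ x₁ ∧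
      (MonotoneOn u (Set.Ici x₁) ∨ AntitoneOn u (Set.Ici x₁))) :
    Filter.Tendsto u Filter.atTop (nhds (c / b)) :=
  stmt_16_general a b c hb u hC2 hbdd hode hmono
end

section
/- Let u : [0,∞) → ℝ be continuous, C² on (0,∞), nonconstant, eventually monotone, satisfying x²u'' = axu' + bu − c(u'−1)² on (0,∞) with c > 0 and b = 0. Then u is unbounded. -/
/-!
Put `ψ x = x * u' x`. The equation gives `ψ' = (a + 1) u' - c (u' - 1)² / x`, and on the band
`|ψ| ≤ ε` with `ε` small and `x ≥ 2ε` we have `|u'| ≤ 1/2`, hence `ψ' ≤ -(c/8)/x`. So `ψ` can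
never climb back to a level inside the band, and while in the band it falls at a logarithmic rate.
If `ψ > ε` for all large `x`, then `u' > ε/x` and `u` grows like `ε log x`. Otherwise `ψ` enters
the band, crosses it, and stays below `-ε`, so `u' ≤ -ε/x` and `u` decreases like `-ε log x`.
-/

open Set Filter Real Topology

lemma not_tendsto_atBot_of_eventually_abs_le {α : Type*} {l : Filter α} [l.NeBot]
    {f : α → ℝ} {M : ℝ} (hf : ∀ᶠ x in l, |f x| ≤ M) : ¬ Tendsto f l atBot := fun h => by
  obtain ⟨x, hx, hxM⟩ := ((h.eventually_lt_atBot (-M)).and hf).exists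
  linarith [neg_abs_le (f x)]

lemma le_of_hasDerivAt_neg_at_level {f f' : ℝ → ℝ} {s B : ℝ}
    (hf : ∀ y, s ≤ y → HasDerivAt f (f' y) y) (hB : ∀ y, s ≤ y → f y = B → f' y < 0)
    (hs : f s ≤ B) {t : ℝ} (ht : s ≤ t) : f t ≤ B :=
  image_le_of_deriv_right_lt_deriv_boundary (B := fun _ => B) (B' := fun _ => 0)
    (fun y hy => (hf y hy.1).continuousAt.continuousWithinAt)
    (fun y hy => (hf y hy.1).hasDerivWithinAt) hs (fun _ => hasDerivAt_const _ _)
    (fun y hy => hB y hy.1) ⟨ht, le_rfl⟩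

lemma le_sub_mul_log_of_hasDerivAt_le_neg_div {f f' : ℝ → ℝ} {s δ : ℝ} (hs : 0 < s)
    (hf : ∀ y, s ≤ y → HasDerivAt f (f' y) y) (hf' : ∀ y, s ≤ y → f' y ≤ -δ / y)
    {t : ℝ} (ht : s ≤ t) : f t ≤ f s + δ * log s - δ * log t := by
  have hg : ∀ y, s ≤ y → HasDerivAt (fun x => f x + δ * log x) (f' y + δ * y⁻¹) y :=
    fun y hy => (hf y hy).add ((hasDerivAt_log (hs.trans_le hy).ne').const_mul δ)
  have key := image_le_of_deriv_right_le_deriv_boundary (B := fun _ => f s + δ * log s)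
    (B' := fun _ => 0) (fun y hy => (hg y hy.1).continuousAt.continuousWithinAt)
    (fun y hy => (hg y hy.1).hasDerivWithinAt) le_rfl continuousOn_const
    (fun _ _ => hasDerivWithinAt_const _ _ _)
    (fun y hy => by
      have := hf' y hy.1
      rw [div_eq_mul_inv, neg_mul] at this
      linarith) ⟨ht, le_rfl⟩
  linarith

lemma tendsto_atBot_of_hasDerivAt_le_neg_div {f f' : ℝ → ℝ} {δ : ℝ} (hδ : 0 < δ)
    (hf : ∀ᶠ y in atTop, HasDerivAt f (f' y) y) (hf' : ∀ᶠ y in atTop, f' y ≤ -δ / y) :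
    Tendsto f atTop atBot := by
  obtain ⟨s, hs⟩ := eventually_atTop.1 ((hf.and hf').and (eventually_gt_atTop 0))
  have hlog : Tendsto (fun t => f s + δ * log s - δ * log t) atTop atBot :=
    tendsto_atBot_add_const_left _ _ <| tendsto_neg_atTop_atBot.comp <|
      tendsto_log_atTop.const_mul_atTop hδ
  refine tendsto_atBot_mono' _ ?_ hlog
  filter_upwards [eventually_ge_atTop s] with t ht
  exact le_sub_mul_log_of_hasDerivAt_le_neg_div (hs s le_rfl).2
    (fun y hy => (hs y hy).1.1) (fun y hy => (hs y hy).1.2) ht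

lemma eventually_le_neg_of_hasDerivAt_le_neg_div_on_band {ψ Φ : ℝ → ℝ} {x₀ ε δ ξ : ℝ}
    (hx₀ : 0 < x₀) (hε : 0 ≤ ε) (hδ : 0 < δ) (hψ : ∀ y, x₀ ≤ y → HasDerivAt ψ (Φ y) y)
    (hΦ : ∀ y, x₀ ≤ y → |ψ y| ≤ ε → Φ y ≤ -δ / y) (hξ : x₀ ≤ ξ) (hψξ : ψ ξ ≤ ε) :
    ∀ᶠ y in atTop, ψ y ≤ -ε := by
  have hlevel : ∀ s, x₀ ≤ s → ∀ B, |B| ≤ ε → ψ s ≤ B → ∀ y, s ≤ y → ψ y ≤ B :=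
    fun s hs B hB hψs y hy => le_of_hasDerivAt_neg_at_level
      (fun z hz => hψ z (hs.trans hz))
      (fun z hz hψz => (hΦ z (hs.trans hz) (hψz ▸ hB)).trans_lt
        (div_neg_of_neg_of_pos (neg_neg_of_pos hδ) (hx₀.trans_le (hs.trans hz))))
      hψs hy
  have hbelow : ∀ y, ξ ≤ y → ψ y ≤ ε := hlevel ξ hξ ε (abs_of_nonneg hε).le hψξ
  obtain ⟨w, hξw, hψw⟩ : ∃ w, ξ ≤ w ∧ ψ w ≤ -ε := by
    by_contra! habove
    have hdiv : Tendsto ψ atTop atBot := by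
      refine tendsto_atBot_of_hasDerivAt_le_neg_div (f' := Φ) hδ ?_ ?_
      · filter_upwards [eventually_ge_atTop x₀] with y hy using hψ y hy
      · filter_upwards [eventually_ge_atTop ξ] with y hy
        exact hΦ y (hξ.trans hy) (abs_le.2 ⟨(habove y hy).le, hbelow y hy⟩)
    obtain ⟨y, hy, hξy⟩ :=
      ((hdiv.eventually_le_atBot (-ε)).and (eventually_ge_atTop ξ)).exists
    exact (habove y hξy).not_ge hy
  filter_upwards [eventually_ge_atTop w] with y hy
  exact hlevel w (hξ.trans hξw) (-ε) (by rw [abs_neg, abs_of_nonneg hε]) hψw y hy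

lemma hasDerivAt_mul_deriv_of_ode {u : ℝ → ℝ} {a c y : ℝ} (hu : ContDiffOn ℝ 2 u (Ioi 0))
    (hy : 0 < y)
    (hode : y ^ 2 * deriv (deriv u) y = a * y * deriv u y - c * (deriv u y - 1) ^ 2) :
    HasDerivAt (fun x => x * deriv u x) ((a + 1) * deriv u y - c * (deriv u y - 1) ^ 2 / y) y := by
  have hu' : ContDiffOn ℝ 1 (deriv u) (Ioi 0) := hu.deriv_of_isOpen isOpen_Ioi (by norm_num)
  have hu'' : HasDerivAt (deriv u) (deriv (deriv u) y) y :=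
    ((hu'.differentiableOn one_ne_zero).differentiableAt (isOpen_Ioi.mem_nhds hy)).hasDerivAt
  refine ((hasDerivAt_id' y).mul hu'').congr_deriv ?_
  field_simp
  linear_combination hode

lemma add_one_mul_sub_sq_div_le_of_abs_mul_le {a c v y ε : ℝ} (hc : 0 ≤ c) (hy : 0 < y)
    (hεy : 2 * ε ≤ y) (hεa : |a + 1| * ε ≤ c / 8) (hv : |y * v| ≤ ε) :
    (a + 1) * v - c * (v - 1) ^ 2 / y ≤ -(c / 8) / y := by
  have hv_half : |v| ≤ 1 / 2 := by
    rw [abs_mul, abs_of_pos hy] at hv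
    nlinarith [abs_nonneg v]
  have hsq : 1 / 4 ≤ (v - 1) ^ 2 := by
    nlinarith [abs_le.1 hv_half]
  have hlin : (a + 1) * (y * v) ≤ c / 8 :=
    calc (a + 1) * (y * v) ≤ |a + 1| * |y * v| := by rw [← abs_mul]; exact le_abs_self _
      _ ≤ |a + 1| * ε := by gcongr
      _ ≤ c / 8 := hεa
  have hrw : (a + 1) * v - c * (v - 1) ^ 2 / y = ((a + 1) * (y * v) - c * (v - 1) ^ 2) / y := by
    field_simp
  rw [hrw]
  gcongr
  nlinarith

theorem stmt_17_general (a c : ℝ) (hc : 0 < c) (u : ℝ → ℝ)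
    (hC2 : ContDiffOn ℝ 2 u (Set.Ioi 0))
    (hode : ∀ x ∈ Set.Ioi (0:ℝ),
      x ^ 2 * deriv (deriv u) x
        = a * x * deriv u x + (0:ℝ) * u x - c * (deriv u x - 1) ^ 2) :
    ¬ ∃ M : ℝ, ∀ x ∈ Set.Ici (0:ℝ), |u x| ≤ M := by
  rintro ⟨M, hM⟩
  have hbdd : ∀ᶠ x in atTop, |u x| ≤ M := by
    filter_upwards [eventually_ge_atTop 0] with x hx using hM x hx
  set ε := c / (8 * (|a + 1| + 1))
  have hε : 0 < ε := by positivity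
  have hεa : |a + 1| * ε ≤ c / 8 := by
    rw [mul_div_assoc', div_le_div_iff₀ (by positivity) (by norm_num)]
    nlinarith [abs_nonneg (a + 1)]
  have hu : ∀ᶠ y in atTop, HasDerivAt u (deriv u y) y := by
    filter_upwards [eventually_gt_atTop 0] with y hy
    exact ((hC2.differentiableOn two_ne_zero).differentiableAt (isOpen_Ioi.mem_nhds hy)).hasDerivAt
  have hψ : ∀ y, 2 * ε ≤ y → HasDerivAt (fun x => x * deriv u x)
      ((a + 1) * deriv u y - c * (deriv u y - 1) ^ 2 / y) y := fun y hy =>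
    hasDerivAt_mul_deriv_of_ode hC2 (by linarith)
      (by simpa only [zero_mul, add_zero] using hode y (mem_Ioi.2 (by linarith)))
  obtain ⟨ξ, hξ, hψξ⟩ : ∃ ξ, 2 * ε ≤ ξ ∧ ξ * deriv u ξ ≤ ε := by
    by_contra! h
    refine not_tendsto_atBot_of_eventually_abs_le (f := fun x => -u x)
      (by simpa only [abs_neg] using hbdd) ?_
    refine tendsto_atBot_of_hasDerivAt_le_neg_div hε (hu.mono fun y hy => hy.neg) ?_
    filter_upwards [eventually_ge_atTop (2 * ε)] with y hy
    rw [neg_div, neg_le_neg_iff, div_le_iff₀ (by linarith)]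
    linarith [h y hy]
  have hψ_neg := eventually_le_neg_of_hasDerivAt_le_neg_div_on_band (by linarith) hε.le
    (by positivity : 0 < c / 8) hψ
    (fun y hy hψy => add_one_mul_sub_sq_div_le_of_abs_mul_le hc.le (by linarith) hy hεa hψy)
    hξ hψξ
  refine not_tendsto_atBot_of_eventually_abs_le hbdd
    (tendsto_atBot_of_hasDerivAt_le_neg_div hε hu ?_)
  filter_upwards [hψ_neg, eventually_gt_atTop 0] with y hy hy0
  exact (le_div_iff₀' hy0).2 hy

/-- Lemma 3.2(i), case `b = 0`: a nonconstant, eventually monotone solution is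
unbounded. -/
theorem stmt_17 (a c : ℝ) (hc : 0 < c) (u : ℝ → ℝ)
    (hcont : ContinuousOn u (Set.Ici 0))
    (hC2 : ContDiffOn ℝ 2 u (Set.Ioi 0))
    (hode : ∀ x ∈ Set.Ioi (0:ℝ),
      x ^ 2 * deriv (deriv u) x
        = a * x * deriv u x + (0:ℝ) * u x - c * (deriv u x - 1) ^ 2)
    (hnonconst : ¬ ∀ x ∈ Set.Ici (0:ℝ), u x = u 0)
    (hmono : ∃ x₁ : ℝ, 0 ≤ x₁ ∧
      (MonotoneOn u (Set.Ici x₁) ∨ AntitoneOn u (Set.Ici x₁))) :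
    ¬ ∃ M : ℝ, ∀ x ∈ Set.Ici (0:ℝ), |u x| ≤ M :=
  stmt_17_general a c hc u hC2 hode
end

section
/- Let u, v : [0,∞) → ℝ be two distinct solutions of x²w'' = axw' + bw − c(w'−1)² on (0,∞) with c > 0, u(0) = v(0), u'(0⁺) = v'(0⁺) = 1, u'' ≤ 0 on (0,∞), and suppose both u' and v' tend to 0 at infinity. Then a contradiction follows; i.e., there is at most one solution u with 0 ≤ u(x) ≤ x on [0,∞) (satisfying these boundary behaviors). -/
/-!
Put `w = v - u`. Differentiating the equation once shows that `z = w'` solves the linear equation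
`x² z'' = ((a - 2) x - 2c (v' - 1)) z' + (a + b - 2c u'') z`.
A solution with `u'(0⁺) = 1` forces `a + b ≥ 0` (otherwise `u'` blows up at `0`), so together
with `u'' ≤ 0` the coefficient of `z` is nonnegative. The maximum principle then applies: with an
integrating factor `e^{-Γ}`, `Γ' = g`, one has `(e^{-Γ} y')' = e^{-Γ} h y ≥ 0` wherever `y ≥ 0`,
so `y` cannot decrease after a positive interior maximum. As `z → 0` at `0` and at `∞`, `z ≡ 0`,
and `w(0) = 0` gives `w ≡ 0`.
-/

open Set Filter Topology Real

theorem exists_forall_hasDerivAt_of_continuousOn_Ioi {g : ℝ → ℝ} {a : ℝ}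
    (hg : ContinuousOn g (Ioi a)) : ∃ Γ : ℝ → ℝ, ∀ x ∈ Ioi a, HasDerivAt Γ (g x) x := by
  refine ⟨fun x => ∫ t in (a + 1)..x, g t, fun x hx => ?_⟩
  have hsub : uIcc (a + 1) x ⊆ Ioi a := fun t ht =>
    lt_of_lt_of_le (lt_min (by linarith) hx) ht.1
  exact intervalIntegral.integral_hasDerivAt_right (hg.mono hsub).intervalIntegrable
    (hg.stronglyMeasurableAtFilter isOpen_Ioi x hx) (hg.continuousAt (Ioi_mem_nhds hx))

theorem monotoneOn_exp_neg_mul_of_hasDerivAt {y y' g h Γ : ℝ → ℝ} {D : Set ℝ}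
    (hD : Convex ℝ D) (hy' : ∀ x ∈ D, HasDerivAt y' (g x * y' x + h x * y x) x)
    (hΓ : ∀ x ∈ D, HasDerivAt Γ (g x) x) (hhy : ∀ x ∈ D, 0 ≤ h x * y x) :
    MonotoneOn (fun x => exp (-Γ x) * y' x) D := by
  have hP : ∀ x ∈ D, HasDerivAt (fun x => exp (-Γ x) * y' x) (exp (-Γ x) * (h x * y x)) x :=
    fun x hx => ((hΓ x hx).neg.exp.mul (hy' x hx)).congr_deriv (by simp only [Pi.neg_apply]; ring)
  exact monotoneOn_of_hasDerivWithinAt_nonneg hD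
    (fun x hx => (hP x hx).continuousAt.continuousWithinAt)
    (fun x hx => (hP x (interior_subset hx)).hasDerivWithinAt)
    (fun x hx => mul_nonneg (exp_pos _).le (hhy x (interior_subset hx)))

theorem le_of_hasDerivAt_of_deriv_eq_zero {y y' g h : ℝ → ℝ} {a ρ R : ℝ}
    (hy : ∀ x ∈ Ioi a, HasDerivAt y (y' x) x)
    (hy' : ∀ x ∈ Ioi a, HasDerivAt y' (g x * y' x + h x * y x) x)
    (hg : ContinuousOn g (Ioi a)) (hh : ∀ x ∈ Ioi a, 0 ≤ h x)
    (hρ : a < ρ) (hρR : ρ ≤ R) (hy'ρ : y' ρ = 0) (hyρ : 0 < y ρ) : y ρ ≤ y R := by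
  by_contra! hlt
  have hsub : Icc ρ R ⊆ Ioi a := fun x hx => hρ.trans_le hx.1
  -- the first point after `ρ` where `y` falls to the level `ℓ`
  set ℓ := max (y R) (y ρ / 2)
  set T := Icc ρ R ∩ y ⁻¹' Iic ℓ
  have hTclosed : IsClosed T := ContinuousOn.preimage_isClosed_of_isClosed
    (fun x hx => (hy x (hsub hx)).continuousAt.continuousWithinAt) isClosed_Icc isClosed_Iic
  have hTbdd : BddBelow T := ⟨ρ, fun x hx => hx.1.1⟩
  have ht : sInf T ∈ T := hTclosed.csInf_mem ⟨R, ⟨hρR, le_rfl⟩, (le_max_left _ _ : y R ≤ ℓ)⟩ hTbdd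
  set t := sInf T
  have habove : ∀ x ∈ Ico ρ t, ℓ < y x := fun x hx => by
    by_contra! hle
    exact (csInf_le hTbdd ⟨⟨hx.1, hx.2.le.trans ht.1.2⟩, hle⟩).not_gt hx.2
  have hIco : Ico ρ t ⊆ Ioi a := fun x hx => hρ.trans_le hx.1
  obtain ⟨Γ, hΓ⟩ := exists_forall_hasDerivAt_of_continuousOn_Ioi hg
  have hP := monotoneOn_exp_neg_mul_of_hasDerivAt (convex_Ico ρ t)
    (fun x hx => hy' x (hIco hx)) (fun x hx => hΓ x (hIco hx))
    (fun x hx => mul_nonneg (hh x (hIco hx))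
      ((lt_max_of_lt_right (half_pos hyρ)).trans (habove x hx)).le)
  have hy'nonneg : ∀ x ∈ Ioo ρ t, 0 ≤ y' x := fun x hx => by
    have := hP ⟨le_rfl, hx.1.trans hx.2⟩ (Ioo_subset_Ico_self hx) hx.1.le
    simp only [hy'ρ, mul_zero] at this
    exact nonneg_of_mul_nonneg_right this (exp_pos _)
  have hmono : MonotoneOn y (Icc ρ t) := monotoneOn_of_hasDerivWithinAt_nonneg (convex_Icc ρ t)
    (fun x hx => (hy x (hρ.trans_le hx.1)).continuousAt.continuousWithinAt)
    (fun x hx => by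
      rw [interior_Icc] at hx
      exact (hy x (hρ.trans hx.1)).hasDerivWithinAt)
    (by simpa only [interior_Icc] using hy'nonneg)
  have hyt : y t ≤ ℓ := ht.2
  have hℓ : ℓ < y ρ := max_lt hlt (half_lt_self hyρ)
  linarith [hmono ⟨le_rfl, ht.1.1⟩ ⟨ht.1.1, le_rfl⟩ ht.1.1]

theorem nonpos_of_hasDerivAt_of_tendsto_zero {y y' g h : ℝ → ℝ} {a : ℝ}
    (hy : ∀ x ∈ Ioi a, HasDerivAt y (y' x) x)
    (hy' : ∀ x ∈ Ioi a, HasDerivAt y' (g x * y' x + h x * y x) x)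
    (hg : ContinuousOn g (Ioi a)) (hh : ∀ x ∈ Ioi a, 0 ≤ h x)
    (hya : Tendsto y (𝓝[>] a) (𝓝 0)) (hytop : Tendsto y atTop (𝓝 0)) :
    ∀ x ∈ Ioi a, y x ≤ 0 := by
  intro x₁ hx₁
  by_contra! hpos
  obtain ⟨R₀, hR₀⟩ := (hytop.eventually (gt_mem_nhds hpos)).exists_forall_of_atTop
  set R := max R₀ (x₁ + 1)
  have hx₁R : x₁ < R := (lt_add_one x₁).trans_le (le_max_right _ _)
  obtain ⟨δ, hyδ, hδ⟩ :=
    ((hya.eventually (gt_mem_nhds hpos)).and (Ioo_mem_nhdsGT hx₁)).exists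
  have hsub : Icc δ R ⊆ Ioi a := fun x hx => hδ.1.trans_le hx.1
  obtain ⟨ρ, hρ, hmax⟩ := isCompact_Icc.exists_isMaxOn_mem_subset (s := Ioo δ R)
    (fun x hx => (hy x (hsub hx)).continuousAt.continuousWithinAt)
    (⟨hδ.2.le, hx₁R.le⟩ : x₁ ∈ Icc δ R) (fun x hx => by
      rcases eq_endpoints_or_mem_Ioo_of_mem_Icc hx.1 with rfl | rfl | h
      · exact hyδ
      · exact hR₀ _ (le_max_left _ _)
      · exact absurd h hx.2)
  have hy'ρ : y' ρ = 0 := (hmax.isLocalMax (Icc_mem_nhds hρ.1 hρ.2)).hasDerivAt_eq_zero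
    (hy ρ (hsub (Ioo_subset_Icc_self hρ)))
  have hx₁ρ : y x₁ ≤ y ρ := hmax ⟨hδ.2.le, hx₁R.le⟩
  have := le_of_hasDerivAt_of_deriv_eq_zero hy hy' hg hh (hδ.1.trans hρ.1) hρ.2.le hy'ρ
    (hpos.trans_le hx₁ρ)
  linarith [hR₀ R (le_max_left _ _)]

theorem eq_zero_of_hasDerivAt_of_tendsto_zero {y y' g h : ℝ → ℝ} {a : ℝ}
    (hy : ∀ x ∈ Ioi a, HasDerivAt y (y' x) x)
    (hy' : ∀ x ∈ Ioi a, HasDerivAt y' (g x * y' x + h x * y x) x)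
    (hg : ContinuousOn g (Ioi a)) (hh : ∀ x ∈ Ioi a, 0 ≤ h x)
    (hya : Tendsto y (𝓝[>] a) (𝓝 0)) (hytop : Tendsto y atTop (𝓝 0)) :
    ∀ x ∈ Ioi a, y x = 0 := by
  have hneg := nonpos_of_hasDerivAt_of_tendsto_zero (y := fun x => -y x)
    (y' := fun x => -y' x) (fun x hx => (hy x hx).neg)
    (fun x hx => (hy' x hx).neg.congr_deriv (by ring))
    hg hh (by simpa using hya.neg) (by simpa using hytop.neg)
  intro x hx
  linarith [nonpos_of_hasDerivAt_of_tendsto_zero hy hy' hg hh hya hytop x hx, hneg x hx]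

theorem tendsto_atTop_of_hasDerivAt_le {f f' G G' : ℝ → ℝ} {p : ℝ}
    (hf : ∀ᶠ x in 𝓝[>] p, HasDerivAt f (f' x) x) (hG : ∀ᶠ x in 𝓝[>] p, HasDerivAt G (G' x) x)
    (hle : ∀ᶠ x in 𝓝[>] p, f' x ≤ G' x) (hGtop : Tendsto G (𝓝[>] p) atTop) :
    Tendsto f (𝓝[>] p) atTop := by
  obtain ⟨q, hpq : p < q, hq⟩ := mem_nhdsGT_iff_exists_Ioo_subset.1 (hf.and (hG.and hle))
  have hanti : AntitoneOn (fun x => f x - G x) (Ioo p q) :=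
    antitoneOn_of_hasDerivWithinAt_nonpos (convex_Ioo p q)
      (fun x hx => ((hq hx).1.sub (hq hx).2.1).continuousAt.continuousWithinAt)
      (fun x hx => by
        rw [interior_Ioo] at hx
        exact ((hq hx).1.sub (hq hx).2.1).hasDerivWithinAt)
      (fun x hx => by
        rw [interior_Ioo] at hx
        exact sub_nonpos.2 (hq hx).2.2)
  obtain ⟨m, hm⟩ := nonempty_Ioo.2 hpq
  refine tendsto_atTop_mono' _ ?_ (tendsto_atTop_add_const_right _ (f m - G m) hGtop)
  filter_upwards [Ioo_mem_nhdsGT hm.1] with x hx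
  linarith [hanti ⟨hx.1, hx.2.trans hm.2⟩ hm hx.2.le]

section ODE

variable {a b c : ℝ} {u : ℝ → ℝ}

theorem tendsto_sq_mul_deriv_deriv_of_ode (hu0 : ContinuousWithinAt u (Ici 0) 0)
    (hode : ∀ x ∈ Ioi (0:ℝ),
      x ^ 2 * deriv (deriv u) x = a * x * deriv u x + b * u x - c * (deriv u x - 1) ^ 2)
    (hu'0 : Tendsto (deriv u) (𝓝[>] 0) (𝓝 1)) :
    Tendsto (fun x => x ^ 2 * deriv (deriv u) x) (𝓝[>] 0) (𝓝 (b * u 0)) := by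
  have hx : Tendsto (fun x : ℝ => x) (𝓝[>] 0) (𝓝 0) := nhdsWithin_le_nhds
  have hu0' : Tendsto u (𝓝[>] 0) (𝓝 (u 0)) :=
    hu0.mono_left (nhdsWithin_mono _ Ioi_subset_Ici_self)
  have hlim : Tendsto (fun x => a * x * deriv u x + b * u x - c * (deriv u x - 1) ^ 2) (𝓝[>] 0)
      (𝓝 (b * u 0)) := by
    simpa using ((hx.const_mul a).mul hu'0).add (hu0'.const_mul b) |>.sub
      (((hu'0.sub_const 1).pow 2).const_mul c)
  exact hlim.congr' (eventually_of_mem self_mem_nhdsWithin fun x hx => (hode x hx).symm)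

theorem eventually_deriv_deriv_le_of_ode (hc : 0 ≤ c) (hu0 : ContinuousWithinAt u (Ici 0) 0)
    (hu : ∀ x ∈ Ioi (0:ℝ), DifferentiableAt ℝ u x)
    (hode : ∀ x ∈ Ioi (0:ℝ),
      x ^ 2 * deriv (deriv u) x = a * x * deriv u x + b * u x - c * (deriv u x - 1) ^ 2)
    (hu'0 : Tendsto (deriv u) (𝓝[>] 0) (𝓝 1)) (hs : b * u 0 ≤ 0) {K : ℝ} (hK : a + b < K) :
    ∀ᶠ x in 𝓝[>] 0, deriv (deriv u) x ≤ K * x⁻¹ := by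
  have hslope : Tendsto (slope u 0) (𝓝[>] 0) (𝓝 1) :=
    (hasDerivWithinAt_iff_tendsto_slope' self_notMem_Ioi).1
      (hasDerivWithinAt_Ici_of_tendsto_deriv (fun x hx => (hu x hx).differentiableWithinAt)
        (hu0.mono Ioi_subset_Ici_self) self_mem_nhdsWithin hu'0).Ioi_of_Ici
  have hlim := (hu'0.const_mul a).add (hslope.const_mul b)
  rw [mul_one, mul_one] at hlim
  filter_upwards [self_mem_nhdsWithin, hlim.eventually (gt_mem_nhds hK)] with x (hx : 0 < x) hlt
  rw [slope_def_field, sub_zero] at hlt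
  -- `x² u'' ≤ a x u' + b (u x - u 0) < K x`, as `c ≥ 0` and `b u(0) ≤ 0`
  have h1 : x ^ 2 * deriv (deriv u) x ≤ x * K := by
    have : x * (a * deriv u x + b * ((u x - u 0) / x)) = a * x * deriv u x + b * (u x - u 0) := by
      field_simp
    rw [hode x hx]
    nlinarith [mul_nonneg hc (sq_nonneg (deriv u x - 1))]
  rw [← div_eq_mul_inv, le_div_iff₀ hx]
  nlinarith

theorem add_nonneg_of_ode (hc : 0 ≤ c) (hu0 : ContinuousWithinAt u (Ici 0) 0)
    (hu : ∀ x ∈ Ioi (0:ℝ), DifferentiableAt ℝ u x)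
    (hu' : ∀ x ∈ Ioi (0:ℝ), DifferentiableAt ℝ (deriv u) x)
    (hode : ∀ x ∈ Ioi (0:ℝ),
      x ^ 2 * deriv (deriv u) x = a * x * deriv u x + b * u x - c * (deriv u x - 1) ^ 2)
    (hu'0 : Tendsto (deriv u) (𝓝[>] 0) (𝓝 1)) : 0 ≤ a + b := by
  by_contra! hab
  have hpos : ∀ᶠ x in 𝓝[>] (0:ℝ), 0 < x := self_mem_nhdsWithin
  have hu'' : ∀ᶠ x in 𝓝[>] (0:ℝ), HasDerivAt (deriv u) (deriv (deriv u) x) x :=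
    hpos.mono fun x hx => (hu' x hx).hasDerivAt
  rcases le_or_gt (b * u 0) 0 with hs | hs
  · -- `u'' ≤ (a + b) / (2 x)` near `0`, so `u'` blows up like `(a + b) / 2 * log x`
    refine not_tendsto_atTop_of_tendsto_nhds hu'0 (tendsto_atTop_of_hasDerivAt_le
      (G := fun x => (a + b) / 2 * log x) hu''
      (hpos.mono fun x hx => (hasDerivAt_log hx.ne').const_mul _)
      (eventually_deriv_deriv_le_of_ode hc hu0 hu hode hu'0 hs (by linarith))
      (tendsto_log_nhdsGT_zero.const_mul_atBot_of_neg (by linarith)))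
  · -- `u'' ≥ b u(0) / (2 x²)` near `0`, so `-u'` blows up like `b u(0) / (2 x)`
    refine not_tendsto_atTop_of_tendsto_nhds hu'0.neg (tendsto_atTop_of_hasDerivAt_le
      (G := fun x => b * u 0 / 2 * x⁻¹) (hu''.mono fun x hx => hx.neg)
      (hpos.mono fun x hx => (hasDerivAt_inv hx.ne').const_mul _) ?_
      (tendsto_inv_nhdsGT_zero.const_mul_atTop (by linarith)))
    filter_upwards [hpos, (tendsto_sq_mul_deriv_deriv_of_ode hu0 hode hu'0).eventually
      (lt_mem_nhds (half_lt_self hs))] with x hx hlt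
    rw [mul_neg, neg_le_neg_iff, ← div_eq_mul_inv, div_le_iff₀ (by positivity)]
    linarith

theorem hasDerivAt_deriv_deriv_of_ode
    (hu : ∀ x ∈ Ioi (0:ℝ), DifferentiableAt ℝ u x)
    (hu' : ∀ x ∈ Ioi (0:ℝ), DifferentiableAt ℝ (deriv u) x)
    (hode : ∀ x ∈ Ioi (0:ℝ),
      x ^ 2 * deriv (deriv u) x = a * x * deriv u x + b * u x - c * (deriv u x - 1) ^ 2)
    {x : ℝ} (hx : 0 < x) :
    HasDerivAt (deriv (deriv u)) (((a - 2) * x * deriv (deriv u) x + (a + b) * deriv u x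
      - 2 * c * (deriv u x - 1) * deriv (deriv u) x) / x ^ 2) x := by
  have heq : deriv (deriv u) =ᶠ[𝓝 x]
      fun t => (a * t * deriv u t + b * u t - c * (deriv u t - 1) ^ 2) / t ^ 2 :=
    eventually_of_mem (Ioi_mem_nhds hx) fun t ht =>
      (eq_div_iff (pow_ne_zero 2 (ne_of_gt ht))).2 (by rw [mul_comm]; exact hode t ht)
  have hN : HasDerivAt (fun t => a * t * deriv u t + b * u t - c * (deriv u t - 1) ^ 2) _ x :=
    (((hasDerivAt_id' x).const_mul a).fun_mul (hu' x hx).hasDerivAt).add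
    ((hu x hx).hasDerivAt.const_mul b) |>.sub
      ((((hu' x hx).hasDerivAt.sub_const 1).fun_pow 2).const_mul c)
  refine heq.hasDerivAt_iff.2 ((hN.div (hasDerivAt_pow 2 x) (by positivity)).congr_deriv ?_)
  field_simp
  linear_combination (2 * x) * hode x hx

theorem hasDerivAt_deriv_deriv_sub_of_ode {v : ℝ → ℝ}
    (hu : ∀ x ∈ Ioi (0:ℝ), DifferentiableAt ℝ u x)
    (hu' : ∀ x ∈ Ioi (0:ℝ), DifferentiableAt ℝ (deriv u) x)
    (hodeu : ∀ x ∈ Ioi (0:ℝ),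
      x ^ 2 * deriv (deriv u) x = a * x * deriv u x + b * u x - c * (deriv u x - 1) ^ 2)
    (hv : ∀ x ∈ Ioi (0:ℝ), DifferentiableAt ℝ v x)
    (hv' : ∀ x ∈ Ioi (0:ℝ), DifferentiableAt ℝ (deriv v) x)
    (hodev : ∀ x ∈ Ioi (0:ℝ),
      x ^ 2 * deriv (deriv v) x = a * x * deriv v x + b * v x - c * (deriv v x - 1) ^ 2)
    {x : ℝ} (hx : 0 < x) :
    HasDerivAt (fun t => deriv (deriv v) t - deriv (deriv u) t)
      (((a - 2) * x - 2 * c * (deriv v x - 1)) / x ^ 2 * (deriv (deriv v) x - deriv (deriv u) x)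
        + (a + b - 2 * c * deriv (deriv u) x) / x ^ 2 * (deriv v x - deriv u x)) x :=
  ((hasDerivAt_deriv_deriv_of_ode hv hv' hodev hx).sub
    (hasDerivAt_deriv_deriv_of_ode hu hu' hodeu hx)).congr_deriv (by field_simp; ring)

end ODE

theorem differentiableAt_deriv_of_contDiffOn_two {f : ℝ → ℝ} {s : Set ℝ} (hs : IsOpen s)
    (hf : ContDiffOn ℝ 2 f s) {x : ℝ} (hx : x ∈ s) : DifferentiableAt ℝ (deriv f) x :=
  ((hf.deriv_of_isOpen hs (m := 1) (by norm_num)).differentiableOn one_ne_zero).differentiableAt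
    (hs.mem_nhds hx)

/-- Uniqueness (Proposition 4.1 via Lemma 4.2): two distinct solutions with the
same value at `0`, right derivative `1` at `0`, `u'' ≤ 0`, and derivatives
tending to `0` at infinity are impossible. -/
theorem stmt_18 (a b c : ℝ) (hc : 0 < c) (u v : ℝ → ℝ)
    (hucont : ContinuousOn u (Set.Ici 0)) (hvcont : ContinuousOn v (Set.Ici 0))
    (huC2 : ContDiffOn ℝ 2 u (Set.Ioi 0)) (hvC2 : ContDiffOn ℝ 2 v (Set.Ioi 0))
    (hodeu : ∀ x ∈ Set.Ioi (0:ℝ),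
      x ^ 2 * deriv (deriv u) x
        = a * x * deriv u x + b * u x - c * (deriv u x - 1) ^ 2)
    (hodev : ∀ x ∈ Set.Ioi (0:ℝ),
      x ^ 2 * deriv (deriv v) x
        = a * x * deriv v x + b * v x - c * (deriv v x - 1) ^ 2)
    (h0 : u 0 = v 0)
    (hu'0 : Filter.Tendsto (deriv u) (nhdsWithin 0 (Set.Ioi 0)) (nhds 1))
    (hv'0 : Filter.Tendsto (deriv v) (nhdsWithin 0 (Set.Ioi 0)) (nhds 1))
    (hu'' : ∀ x ∈ Set.Ioi (0:ℝ), deriv (deriv u) x ≤ 0)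
    (hu'inf : Filter.Tendsto (deriv u) Filter.atTop (nhds 0))
    (hv'inf : Filter.Tendsto (deriv v) Filter.atTop (nhds 0))
    (hne : ∃ x ∈ Set.Ici (0:ℝ), u x ≠ v x) : False := by
  have hu : ∀ x ∈ Ioi (0:ℝ), DifferentiableAt ℝ u x := fun x hx =>
    (huC2.contDiffAt (Ioi_mem_nhds hx)).differentiableAt (by norm_num)
  have hv : ∀ x ∈ Ioi (0:ℝ), DifferentiableAt ℝ v x := fun x hx =>
    (hvC2.contDiffAt (Ioi_mem_nhds hx)).differentiableAt (by norm_num)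
  have hu' : ∀ x ∈ Ioi (0:ℝ), DifferentiableAt ℝ (deriv u) x := fun _ =>
    differentiableAt_deriv_of_contDiffOn_two isOpen_Ioi huC2
  have hv' : ∀ x ∈ Ioi (0:ℝ), DifferentiableAt ℝ (deriv v) x := fun _ =>
    differentiableAt_deriv_of_contDiffOn_two isOpen_Ioi hvC2
  have hab : 0 ≤ a + b := add_nonneg_of_ode hc.le (hucont 0 self_mem_Ici) hu hu' hodeu hu'0
  have hw' : ∀ x ∈ Ioi (0:ℝ), deriv v x - deriv u x = 0 :=
    eq_zero_of_hasDerivAt_of_tendsto_zero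
      (fun x hx => (hv' x hx).hasDerivAt.sub (hu' x hx).hasDerivAt)
      (fun x hx => hasDerivAt_deriv_deriv_sub_of_ode hu hu' hodeu hv hv' hodev hx)
      (fun x hx => ((continuousAt_const.mul continuousAt_id).sub (continuousAt_const.mul
        ((hv' x hx).continuousAt.sub continuousAt_const))).div (continuousAt_id.pow 2)
        (pow_ne_zero 2 (ne_of_gt hx)) |>.continuousWithinAt)
      (fun x hx => div_nonneg (by nlinarith [hu'' x hx]) (sq_nonneg x))
      (by simpa using hv'0.sub hu'0) (by simpa using hv'inf.sub hu'inf)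
  obtain ⟨p, hp, hne⟩ := hne
  have hp0 : 0 < p := lt_of_le_of_ne hp (by rintro rfl; exact hne h0)
  obtain ⟨ξ, hξ, hslope⟩ := exists_hasDerivAt_eq_slope (fun x => v x - u x)
    (fun x => deriv v x - deriv u x) hp0 ((hvcont.sub hucont).mono Icc_subset_Ici_self)
    (fun x hx => (hv x hx.1).hasDerivAt.sub (hu x hx.1).hasDerivAt)
  rw [hw' ξ hξ.1, h0, sub_self, sub_zero, sub_zero, eq_comm, div_eq_zero_iff] at hslope
  exact hne (sub_eq_zero.1 (hslope.resolve_right hp0.ne')).symm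
end

section
/- Let c > 0, k > 0, l > 0, a ∈ ℝ, α < 3/2 + a − 2cl, and set β := 4ck. Suppose x₁ > 0 satisfies 2ck/√x₁ + α ≥ 0 and 2ck·(3/2 + a − 2cl − α)/√x₁ > α(α−1) − aα − b + 2clα. If φ : (0, x₁) → ℝ satisfies φ(x) ≤ −k + l√x for all x ∈ (0, x₁), then for all x ∈ (0, x₁): (β²/4 − ckβ)·x^{α−1} + [(α−3/2)β/2 + αβ/2 − aβ/2 − 2ckα + clβ]·x^{α−1/2} + [α(α−1) − aα − b + 2clα]·x^α < 0; in particular the coefficient of x^{α−1} vanishes and the coefficient of x^{α−1/2} equals 2ck(α − 3/2 − a + 2cl) < 0. -/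
/-! With `β = 4ck` the coefficient of `x^(α-1)` vanishes identically and the coefficient of
`x^(α-1/2)` is `-D` with `D = 2ck(3/2 + a - 2cl - α) > 0`, so the expression factors as
`x^(α-1/2) (-D + C √x)` with `C` the coefficient of `x^α`. The choice of `x₁` gives
`C √x₁ < D`, and this persists for `x < x₁` since `√` is monotone (trivially when `C ≤ 0`). -/

open Real

lemma mul_sqrt_lt_of_lt_div_sqrt {C D x y : ℝ} (hD : 0 < D) (hxy : x ≤ y) (h : C < D / √y) :
    C * √x < D := by
  rcases le_or_gt C 0 with hC | hC
  · exact (mul_nonpos_of_nonpos_of_nonneg hC (sqrt_nonneg x)).trans_lt hD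
  · have hy : 0 < √y := by
      by_contra! hy
      rw [le_antisymm hy (sqrt_nonneg y), div_zero] at h
      exact h.not_gt hC
    calc C * √x ≤ C * √y := by gcongr
      _ < D := (lt_div_iff₀ hy).mp h

lemma rpow_sub_half_mul_sqrt {x : ℝ} (hx : 0 < x) (α : ℝ) : x ^ (α - 1 / 2) * √x = x ^ α := by
  rw [sqrt_eq_rpow, ← rpow_add hx]
  norm_num

lemma mul_rpow_lt_mul_rpow_sub_half {x C D : ℝ} (hx : 0 < x) (α : ℝ) (h : C * √x < D) :
    C * x ^ α < D * x ^ (α - 1 / 2) := by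
  rw [← rpow_sub_half_mul_sqrt hx α, mul_left_comm, mul_comm D]
  exact mul_lt_mul_of_pos_left h (rpow_pos_of_pos hx _)

theorem stmt_19_general (a b c k l α x₁ : ℝ) (hc : 0 < c) (hk : 0 < k)
    (hα : α < 3 / 2 + a - 2 * c * l)
    (hx₁b : α * (α - 1) - a * α - b + 2 * c * l * α
      < 2 * c * k * (3 / 2 + a - 2 * c * l - α) / Real.sqrt x₁) :
    (∀ x ∈ Set.Ioo 0 x₁,
      ((4 * c * k) ^ 2 / 4 - c * k * (4 * c * k)) * x ^ (α - 1)
      + ((α - 3 / 2) * (4 * c * k) / 2 + α * (4 * c * k) / 2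
          - a * (4 * c * k) / 2 - 2 * c * k * α + c * l * (4 * c * k))
          * x ^ (α - 1 / 2)
      + (α * (α - 1) - a * α - b + 2 * c * l * α) * x ^ α < 0) ∧
    (4 * c * k) ^ 2 / 4 - c * k * (4 * c * k) = 0 ∧
    (α - 3 / 2) * (4 * c * k) / 2 + α * (4 * c * k) / 2 - a * (4 * c * k) / 2
        - 2 * c * k * α + c * l * (4 * c * k)
      = 2 * c * k * (α - 3 / 2 - a + 2 * c * l) ∧
    2 * c * k * (α - 3 / 2 - a + 2 * c * l) < 0 := by
  have hD : 0 < 2 * c * k * (3 / 2 + a - 2 * c * l - α) := by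
    have := sub_pos.2 hα
    positivity
  refine ⟨fun x hx => ?_, by ring, by ring, by linarith⟩
  have hC := mul_sqrt_lt_of_lt_div_sqrt hD hx.2.le hx₁b
  linear_combination mul_rpow_lt_mul_rpow_sub_half hx.1 α hC

/-- Algebraic core of the subsolution construction (Lemma 5.3), with `β = 4ck`. -/
theorem stmt_19 (a b c k l α x₁ : ℝ) (hc : 0 < c) (hk : 0 < k) (hl : 0 < l)
    (hα : α < 3 / 2 + a - 2 * c * l) (hx₁ : 0 < x₁)
    (hx₁a : 0 ≤ 2 * c * k / Real.sqrt x₁ + α)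
    (hx₁b : α * (α - 1) - a * α - b + 2 * c * l * α
      < 2 * c * k * (3 / 2 + a - 2 * c * l - α) / Real.sqrt x₁)
    (φ : ℝ → ℝ)
    (hφ : ∀ x ∈ Set.Ioo 0 x₁, φ x ≤ -k + l * Real.sqrt x) :
    (∀ x ∈ Set.Ioo 0 x₁,
      ((4 * c * k) ^ 2 / 4 - c * k * (4 * c * k)) * x ^ (α - 1)
      + ((α - 3 / 2) * (4 * c * k) / 2 + α * (4 * c * k) / 2
          - a * (4 * c * k) / 2 - 2 * c * k * α + c * l * (4 * c * k))
          * x ^ (α - 1 / 2)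
      + (α * (α - 1) - a * α - b + 2 * c * l * α) * x ^ α < 0) ∧
    (4 * c * k) ^ 2 / 4 - c * k * (4 * c * k) = 0 ∧
    (α - 3 / 2) * (4 * c * k) / 2 + α * (4 * c * k) / 2 - a * (4 * c * k) / 2
        - 2 * c * k * α + c * l * (4 * c * k)
      = 2 * c * k * (α - 3 / 2 - a + 2 * c * l) ∧
    2 * c * k * (α - 3 / 2 - a + 2 * c * l) < 0 :=
  stmt_19_general a b c k l α x₁ hc hk hα hx₁b
end
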